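/- In a unital associative \mathbb{C}(q)-algebra, suppose elements a, b, c satisfy ab - qba = (q^{-1}-q)c and ca - qac = (q^{-1}-q)b. Then the Serre-type identity a^2 b - (q+q^{-1})\,a b a + b a^2 = -q^{-1}(q-q^{-1})^2\, b holds. -/

import Mathlib

/-!
Writing `[x, y]_p = x y - p y x`, the left-hand side is the nested commutator `[a, [a, b]_q]_{q⁻¹}`.
By the first relation `[a, b]_q = (q⁻¹ - q) c`, and `[a, c]_{q⁻¹} = -q⁻¹ [c, a]_q`, which the
second relation turns into a multiple of `b`.
-/

/-- The formal variable `q`, as a generator of the field ℂ(q). -/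
noncomputable def qgen : RatFunc ℂ := RatFunc.X

def qComm {K A : Type*} [CommRing K] [Ring A] [Algebra K A] (p : K) (x y : A) : A :=
  x * y - p • (y * x)

theorem qComm_smul_right {K A : Type*} [CommRing K] [Ring A] [Algebra K A] (p t : K) (x y : A) :
    qComm p x (t • y) = t • qComm p x y := by
  simp only [qComm, mul_smul_comm, smul_mul_assoc, smul_sub, smul_comm p t]

section qComm

variable {K A : Type*} [Field K] [Ring A] [Algebra K A] {q : K}

theorem qComm_inv_eq_neg_smul (hq : q ≠ 0) (x y : A) :
    qComm q⁻¹ x y = -q⁻¹ • qComm q y x := by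
  simp only [qComm, smul_sub, smul_smul, neg_mul, inv_mul_cancel₀ hq, neg_smul, one_smul]
  abel

theorem qComm_inv_qComm (hq : q ≠ 0) (a b : A) :
    qComm q⁻¹ a (qComm q a b) = a * a * b - (q + q⁻¹) • (a * b * a) + b * (a * a) := by
  simp only [qComm, mul_sub, sub_mul, mul_smul_comm, smul_mul_assoc, smul_sub, smul_smul,
    inv_mul_cancel₀ hq, one_smul, add_smul, mul_assoc]
  abel

theorem qSerre_of_qComm_eq (hq : q ≠ 0) {a b c : A}
    (hab : qComm q a b = (q⁻¹ - q) • c) (hca : qComm q c a = (q⁻¹ - q) • b) :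
    a * a * b - (q + q⁻¹) • (a * b * a) + b * (a * a) = (-q⁻¹ * (q - q⁻¹) ^ 2) • b := by
  rw [← qComm_inv_qComm hq, hab, qComm_smul_right, qComm_inv_eq_neg_smul hq, hca, smul_smul,
    smul_smul]
  congr 1
  ring

end qComm

/-- In a unital associative ℂ(q)-algebra, if `ab - q·ba = (q⁻¹-q)·c` and
`ca - q·ac = (q⁻¹-q)·b`, then `a²b - (q+q⁻¹)·aba + ba² = -q⁻¹(q-q⁻¹)²·b`. -/
theorem serre_type_identity {A : Type*} [Ring A] [Algebra (RatFunc ℂ) A]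
    (a b c : A)
    (h1 : a * b - qgen • (b * a) = (qgen⁻¹ - qgen) • c)
    (h2 : c * a - qgen • (a * c) = (qgen⁻¹ - qgen) • b) :
    a * a * b - (qgen + qgen⁻¹) • (a * b * a) + b * (a * a)
      = (-qgen⁻¹ * (qgen - qgen⁻¹) ^ 2) • b :=
  qSerre_of_qComm_eq RatFunc.X_ne_zero h1 h2
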